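/- arXiv:1911.04523 — 3 statements merged into one kernel-verified Lean document; each statement's English description precedes it below -/
import Mathlib

section
/- For a compatible family of partial functions f_i : ℝⁿ ⇀ ℝᵐ (i ∈ I) with open domains, the forward differential of the supremum equals the supremum of the forward differentials: d(⋁_i f_i) = ⋁_i d(f_i), and similarly for reverse differentials d^r(⋁_i f_i) = ⋁_i d^r(f_i). -/
open scoped Classical

noncomputable section

instance {X Y : Type*} : PartialOrder (PFun X Y) :=
  inferInstanceAs (PartialOrder (X → Part Y))

/-- Partial functions `ℝⁿ ⇀ ℝᵐ`. -/
abbrev PF (n m : ℕ) := PFun (Fin n → ℝ) (Fin m → ℝ)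

/-- A partial function between topological spaces is continuous if
preimages of open sets are open. -/
def PCont {X Y : Type*} [TopologicalSpace X] [TopologicalSpace Y] (f : PFun X Y) : Prop :=
  ∀ B : Set Y, IsOpen B → IsOpen (f.preimage B)

/-- Total extension of a partial function (junk value `0` off the domain);
since domains are open, all local differential notions are independent of the junk). -/
def pext {n m : ℕ} (f : PF n m) : (Fin n → ℝ) → (Fin m → ℝ) :=
  fun x => if h : (f x).Dom then (f x).get h else 0

/-- The Jacobian of `f` is defined at `x`: `x ∈ Dom f` and all partial derivatives
of all components of `f` exist at `x`. -/
def JacDefined {n m : ℕ} (f : PF n m) (x : Fin n → ℝ) : Prop :=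
  x ∈ f.Dom ∧ ∀ (i : Fin m) (j : Fin n),
    DifferentiableAt ℝ (fun t : ℝ => pext f (x + t • (Pi.single j 1 : Fin n → ℝ)) i) 0

/-- The Jacobian matrix `J_x(f)` (junk entries where undefined). -/
def jac {n m : ℕ} (f : PF n m) (x : Fin n → ℝ) : Matrix (Fin m) (Fin n) ℝ :=
  fun i j => deriv (fun t : ℝ => pext f (x + t • (Pi.single j 1 : Fin n → ℝ)) i) 0

/-- First component of a concatenated vector. -/
def vleft (n k : ℕ) (z : Fin (n + k) → ℝ) : Fin n → ℝ := fun i => z (Fin.castAdd k i)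
/-- Second component of a concatenated vector. -/
def vright (n k : ℕ) (z : Fin (n + k) → ℝ) : Fin k → ℝ := fun j => z (Fin.natAdd n j)

/-- Forward differential `d(f) : ℝⁿ ×̇ ℝⁿ ⇀ ℝᵐ`, `d(f)(x,y) ≃ J_x(f)·y`. -/
def fdiff {n m : ℕ} (f : PF n m) : PF (n + n) m :=
  fun z => ⟨JacDefined f (vleft n n z),
    fun _ => (jac f (vleft n n z)).mulVec (vright n n z)⟩

/-- Reverse differential `d^r(f) : ℝⁿ ×̇ ℝᵐ ⇀ ℝⁿ`, `d^r(f)(x,y) ≃ J_x(f)ᵀ·y`. -/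
def rdiff {n m : ℕ} (f : PF n m) : PF (n + m) n :=
  fun z => ⟨JacDefined f (vleft n m z),
    fun _ => (jac f (vleft n m z)).transpose.mulVec (vright n m z)⟩

/-- Forward derivative at a point, `d_x(f) : ℝⁿ ⇀ ℝᵐ` (⊥ if the Jacobian is undefined). -/
def fdiffAt {n m : ℕ} (f : PF n m) (x : Fin n → ℝ) : PFun (Fin n → ℝ) (Fin m → ℝ) :=
  fun y => ⟨JacDefined f x, fun _ => (jac f x).mulVec y⟩

/-- Reverse derivative at a point, `d^r_x(f) : ℝᵐ ⇀ ℝⁿ` (⊥ if the Jacobian is undefined). -/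
def rdiffAt {n m : ℕ} (f : PF n m) (x : Fin n → ℝ) : PFun (Fin m → ℝ) (Fin n → ℝ) :=
  fun y => ⟨JacDefined f x, fun _ => (jac f x).transpose.mulVec y⟩

/-- `C^k` for partial functions with open domain: `C⁰` = continuous with open domain;
`C^{k+1}` = the forward differential has domain `Dom f × ℝⁿ` and is `C^k`. -/
def IsCkAux : ℕ → (n m : ℕ) → PF n m → Prop
  | 0, _, _, f => IsOpen f.Dom ∧ PCont f
  | (k+1), n, _, f => (fdiff f).Dom = {z | vleft n n z ∈ f.Dom} ∧ IsCkAux k _ _ (fdiff f)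

def IsCk (k : ℕ) {n m : ℕ} (f : PF n m) : Prop := IsCkAux k n m f

/-- PSmooth = `C^k` for all `k`. -/
def PSmooth {n m : ℕ} (f : PF n m) : Prop := ∀ k, IsCk k f

/-- Continuously differentiable: open domain, continuous, Jacobian defined
and continuous on the whole domain. -/
def ContDiffP {n m : ℕ} (f : PF n m) : Prop :=
  IsOpen f.Dom ∧ PCont f ∧ (∀ x ∈ f.Dom, JacDefined f x) ∧ ContinuousOn (jac f) f.Dom

/-- Supremum (union of graphs) of a family of partial functions. -/
def pfunSup {X Y I : Type*} (f : I → PFun X Y) : PFun X Y :=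
  fun x => ⟨∃ i, (f i x).Dom, fun h => (f (Classical.choose h) x).get (Classical.choose_spec h)⟩

/-- The conditional `Cond(p, f, g)`. -/
def pcond {X Y : Type*} (p : PFun X Bool) (f g : PFun X Y) : PFun X Y :=
  fun x =>
    ⟨(true ∈ p x ∧ (f x).Dom) ∨ (false ∈ p x ∧ (g x).Dom),
     fun h =>
       if htt : true ∈ p x then
         (f x).get (by
           rcases h with ⟨_, hf⟩ | ⟨hff, _⟩
           · exact hf
           · exact absurd (Part.mem_unique htt hff) (by simp))
       else
         (g x).get (by
           rcases h with ⟨htt', _⟩ | ⟨_, hg⟩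
           · exact absurd htt' htt
           · exact hg)⟩

end

/-!
The Jacobian of a partial function at `x` only depends on its germ at `x`, and both
differentials at `(x, y)` are built from that Jacobian alone. Since the domains are open and
the family is compatible, the supremum coincides with `f i` on a neighbourhood of every
point of `Dom (f i)`, so at such points the differentials of the supremum and of `f i` agree.
-/

open Filter Topology

section PFunSup

variable {X Y I : Type*}

theorem pfunSup_apply_of_dom {f : I → PFun X Y}
    (hcompat : ∀ i j, ∃ h : PFun X Y, f i ≤ h ∧ f j ≤ h) {i : I} {x : X} (hx : (f i x).Dom) :
    pfunSup f x = f i x := by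
  refine Part.ext' (iff_of_true ⟨i, hx⟩ hx) fun hsup _ => ?_
  obtain ⟨h, hih, hjh⟩ := hcompat (Classical.choose hsup) i
  exact Part.mem_unique (hih x _ (Part.get_mem _)) (hjh x _ (Part.get_mem _))

theorem pfunSup_apply_eq_of_forall {g : I → PFun X Y} {x : X} {p : Part Y}
    (hdom : p.Dom → ∃ i, (g i x).Dom) (heq : ∀ i, (g i x).Dom → g i x = p) :
    pfunSup g x = p := by
  refine Part.ext' ⟨fun ⟨i, hi⟩ => heq i hi ▸ hi, hdom⟩ fun hsup _ => ?_
  exact Part.get_eq_get_of_eq _ _ (heq _ (Classical.choose_spec hsup))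

theorem pfunSup_eventually_eq [TopologicalSpace X] {f : I → PFun X Y}
    (hcompat : ∀ i j, ∃ h : PFun X Y, f i ≤ h ∧ f j ≤ h) {i : I} (hopen : IsOpen (f i).Dom)
    {x : X} (hx : x ∈ (f i).Dom) : ∀ᶠ y in 𝓝 x, pfunSup f y = f i y :=
  Filter.mem_of_superset (hopen.mem_nhds hx) fun _ hy => pfunSup_apply_of_dom hcompat hy

structure IsLocalOperator {Z W : Type*} [TopologicalSpace X] (D : PFun X Y → PFun Z W)
    (π : Z → X) : Prop where
  apply_congr : ∀ (f g : PFun X Y) (z : Z), (∀ᶠ y in 𝓝 (π z), f y = g y) → D f z = D g z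
  mem_dom_of_dom : ∀ (f : PFun X Y) (z : Z), (D f z).Dom → π z ∈ f.Dom

theorem IsLocalOperator.map_pfunSup {Z W : Type*} [TopologicalSpace X]
    {D : PFun X Y → PFun Z W} {π : Z → X} (hD : IsLocalOperator D π)
    {f : I → PFun X Y} (hdom : ∀ i, IsOpen (f i).Dom)
    (hcompat : ∀ i j, ∃ h : PFun X Y, f i ≤ h ∧ f j ≤ h) :
    D (pfunSup f) = pfunSup (fun i => D (f i)) := by
  funext z
  have hagree : ∀ i, π z ∈ (f i).Dom → D (f i) z = D (pfunSup f) z := fun i hi =>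
    (hD.apply_congr _ _ z (pfunSup_eventually_eq hcompat (hdom i) hi)).symm
  refine (pfunSup_apply_eq_of_forall (fun hz => ?_)
    fun i hi => hagree i (hD.mem_dom_of_dom _ z hi)).symm
  obtain ⟨i, hi⟩ := hD.mem_dom_of_dom _ z hz
  exact ⟨i, hagree i hi ▸ hz⟩

end PFunSup

section Differentials

variable {n m : ℕ}

theorem pext_line_eventuallyEq {f g : PF n m} {x : Fin n → ℝ}
    (h : ∀ᶠ y in 𝓝 x, f y = g y) (i : Fin m) (j : Fin n) :
    (fun t : ℝ => pext f (x + t • (Pi.single j 1 : Fin n → ℝ)) i)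
      =ᶠ[𝓝 0] fun t => pext g (x + t • (Pi.single j 1 : Fin n → ℝ)) i := by
  have hline : Tendsto (fun t : ℝ => x + t • (Pi.single j 1 : Fin n → ℝ)) (𝓝 0) (𝓝 x) := by
    simpa using ((continuous_id.smul continuous_const).const_add x).tendsto (0 : ℝ)
  filter_upwards [hline.eventually h] with t ht
  simp only [pext, ht]

theorem jac_congr {f g : PF n m} {x : Fin n → ℝ} (h : ∀ᶠ y in 𝓝 x, f y = g y) :
    jac f x = jac g x :=
  funext fun i => funext fun j => (pext_line_eventuallyEq h i j).deriv_eq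

theorem jacDefined_congr {f g : PF n m} {x : Fin n → ℝ} (h : ∀ᶠ y in 𝓝 x, f y = g y) :
    JacDefined f x ↔ JacDefined g x := by
  have hx : x ∈ f.Dom ↔ x ∈ g.Dom := by
    rw [PFun.mem_dom, PFun.mem_dom, h.self_of_nhds]
  exact and_congr hx <| forall_congr' fun i => forall_congr' fun j =>
    (pext_line_eventuallyEq h i j).differentiableAt_iff

theorem isLocalOperator_fdiff : IsLocalOperator (fdiff (n := n) (m := m)) (vleft n n) where
  apply_congr _ _ _ h := by rw [fdiff, fdiff, jac_congr h, propext (jacDefined_congr h)]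
  mem_dom_of_dom _ _ hz := hz.1

theorem isLocalOperator_rdiff : IsLocalOperator (rdiff (n := n) (m := m)) (vleft n m) where
  apply_congr _ _ _ h := by rw [rdiff, rdiff, jac_congr h, propext (jacDefined_congr h)]
  mem_dom_of_dom _ _ hz := hz.1

end Differentials

/-- for a compatible family of partial functions with open domains,
the forward differential of the supremum is the supremum of the forward differentials,
and similarly for reverse differentials. -/
theorem diff_of_sup {n m : ℕ} {I : Type*} (f : I → PF n m)
    (hdom : ∀ i, IsOpen (f i).Dom)
    (hcompat : ∀ i j, ∃ h : PF n m, f i ≤ h ∧ f j ≤ h) :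
    fdiff (pfunSup f) = pfunSup (fun i => fdiff (f i)) ∧
    rdiff (pfunSup f) = pfunSup (fun i => rdiff (f i)) :=
  ⟨isLocalOperator_fdiff.map_pfunSup hdom hcompat,
    isLocalOperator_rdiff.map_pfunSup hdom hcompat⟩
end

section
/- Let p : ℝⁿ ⇀ 𝕋 be a continuous partial predicate into the discrete two-point space 𝕋 = {tt, ff} (equivalently, p⁻¹(tt) and p⁻¹(ff) are open), and let f, g : ℝⁿ ⇀ ℝᵐ be partial functions with open domains. Then the forward differential of the conditional satisfies d(Cond(p,f,g)) = Cond(p ∘ π₁, d f, d g), where π₁ projects the first argument. -/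
open scoped Classical

/-!
Where `p x = tt`, the set `p⁻¹(tt)` is an open neighbourhood of `x` on which `Cond(p,f,g)`
coincides with `f` as a partial function, so with the same total extension `pext`; the Jacobian
only sees a neighbourhood of its base point, hence `d(Cond(p,f,g))` and `d f` agree over `x`.
The case `p x = ff` is symmetric, and where `p x` is undefined both sides are undefined.
-/

open Filter Topology

section Cond

variable {X Y : Type*} {p : PFun X Bool} {f g : PFun X Y} {x : X}

theorem pcond_apply_of_true_mem (h : true ∈ p x) : pcond p f g x = f x := by
  have hfalse : false ∉ p x := fun h' => Bool.false_ne_true (Part.mem_unique h' h)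
  refine Part.ext' (by simp [pcond, h, hfalse]) fun _ _ => ?_
  simp [pcond, h]

theorem pcond_apply_of_false_mem (h : false ∈ p x) : pcond p f g x = g x := by
  have htrue : true ∉ p x := fun h' => Bool.false_ne_true (Part.mem_unique h h')
  refine Part.ext' (by simp [pcond, h, htrue]) fun _ _ => ?_
  simp [pcond, htrue]

theorem pcond_apply_eq_none (ht : true ∉ p x) (hf : false ∉ p x) : pcond p f g x = Part.none :=
  Part.eq_none_iff'.2 (by simp [pcond, ht, hf])

theorem pcond_eventuallyEq_left [TopologicalSpace X] (hp : PCont p) (h : true ∈ p x) :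
    pcond p f g =ᶠ[𝓝 x] f := by
  filter_upwards [(hp {true} (isOpen_discrete _)).mem_nhds ⟨true, rfl, h⟩] with y ⟨_, rfl, hy⟩
  exact pcond_apply_of_true_mem hy

theorem pcond_eventuallyEq_right [TopologicalSpace X] (hp : PCont p) (h : false ∈ p x) :
    pcond p f g =ᶠ[𝓝 x] g := by
  filter_upwards [(hp {false} (isOpen_discrete _)).mem_nhds ⟨false, rfl, h⟩] with y ⟨_, rfl, hy⟩
  exact pcond_apply_of_false_mem hy

end Cond

theorem eventuallyEq_along_line {E Z : Type*} [NormedAddCommGroup E] [NormedSpace ℝ E]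
    {φ ψ : E → Z} {x : E} (h : φ =ᶠ[𝓝 x] ψ) (v : E) :
    (fun t : ℝ => φ (x + t • v)) =ᶠ[𝓝 0] fun t => ψ (x + t • v) :=
  h.comp_tendsto (Continuous.tendsto' (by fun_prop) 0 x (by simp))

section Jacobian

variable {n m : ℕ} {F G : PF n m} {x : Fin n → ℝ}

theorem pext_eventuallyEq (h : F =ᶠ[𝓝 x] G) : pext F =ᶠ[𝓝 x] pext G :=
  h.mono fun y hy => by simp only [pext, hy]

theorem jacDefined_iff_of_eventuallyEq (h : F =ᶠ[𝓝 x] G) : JacDefined F x ↔ JacDefined G x := by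
  refine and_congr (by rw [PFun.mem_dom, PFun.mem_dom, h.eq_of_nhds]) ?_
  exact forall_congr' fun i => forall_congr' fun j =>
    ((eventuallyEq_along_line (pext_eventuallyEq h) _).fun_comp (· i)).differentiableAt_iff

theorem jac_eq_of_eventuallyEq (h : F =ᶠ[𝓝 x] G) : jac F x = jac G x := by
  ext i j
  exact ((eventuallyEq_along_line (pext_eventuallyEq h) _).fun_comp (· i)).deriv_eq

theorem fdiff_apply_eq_of_eventuallyEq {z : Fin (n + n) → ℝ}
    (h : F =ᶠ[𝓝 (vleft n n z)] G) : fdiff F z = fdiff G z := by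
  unfold fdiff
  rw [jac_eq_of_eventuallyEq h, jacDefined_iff_of_eventuallyEq h]

theorem fdiff_apply_eq_none {z : Fin (n + n) → ℝ} (h : F (vleft n n z) = Part.none) :
    fdiff F z = Part.none :=
  Part.eq_none_iff'.2 fun hJ => by simpa [PFun.mem_dom, h] using hJ.1

end Jacobian

theorem fdiff_cond_general {n m : ℕ} (p : PFun (Fin n → ℝ) Bool) (f g : PF n m)
    (hp : PCont p) :
    fdiff (pcond p f g) = pcond (fun z => p (vleft n n z)) (fdiff f) (fdiff g) := by
  funext z
  by_cases ht : true ∈ p (vleft n n z)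
  · rw [pcond_apply_of_true_mem (p := fun z => p (vleft n n z)) ht]
    exact fdiff_apply_eq_of_eventuallyEq (pcond_eventuallyEq_left hp ht)
  by_cases hf : false ∈ p (vleft n n z)
  · rw [pcond_apply_of_false_mem (p := fun z => p (vleft n n z)) hf]
    exact fdiff_apply_eq_of_eventuallyEq (pcond_eventuallyEq_right hp hf)
  rw [pcond_apply_eq_none (p := fun z => p (vleft n n z)) ht hf]
  exact fdiff_apply_eq_none (pcond_apply_eq_none ht hf)

/-- for a continuous partial predicate `p` and partial functions `f`, `g`
with open domains, `d(Cond(p,f,g)) = Cond(p ∘ π₁, d f, d g)`. -/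
theorem fdiff_cond {n m : ℕ} (p : PFun (Fin n → ℝ) Bool) (f g : PF n m)
    (hp : PCont p) (hf : IsOpen f.Dom) (hg : IsOpen g.Dom) :
    fdiff (pcond p f g) = pcond (fun z => p (vleft n n z)) (fdiff f) (fdiff g) :=
  fdiff_cond_general p f g hp
end

section
/- Let Q and R be directed-complete pointed partial orders, and let F : P × Q → Q and G : P × Q × R → R be continuous (P a dcpo), such that D(F(x,f)) = G(x, f, D(f)) for all x ∈ P, f ∈ Q, where D : Q → R is a continuous function that is strict and preserves suprema of increasing chains. Then D applied to the least fixed point satisfies D(μf. F(x,f)) = μf'. G(x, μf. F(x,f), f'). -/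
/-!
The iterates `μₙ` of `F(x, ·)` and `νₙ` of `G(x, μ, ·)` (with `μ = sup μₙ`) are compared
levelwise: strictness and `D ∘ F = G ∘ (id, D)` give `D μₙ ≤ νₙ`, because `G` is monotone in
its middle argument and `μₙ ≤ μ`. Conversely `μ` is a fixed point of `F(x, ·)`, so `D μ` is a
fixed point of `G(x, μ, ·)` and therefore bounds every `νₙ`. Continuity of `D` turns the first
comparison into `D μ ≤ sup νₙ`.
-/

def iterLfp {Q : Type*} [Preorder Q] [OrderBot Q] (T : Q → Q) : ℕ → Q
  | 0 => ⊥
  | k + 1 => T (iterLfp T (k))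

open Set Function

section Preorder

variable {Q : Type*} [Preorder Q] [OrderBot Q] {T : Q → Q}

theorem iterLfp_monotone (hT : Monotone T) : Monotone (iterLfp T) := by
  refine monotone_nat_of_le_succ fun n => ?_
  induction n with
  | zero => exact bot_le
  | succ n ih => exact hT ih

theorem iterLfp_le_of_map_le (hT : Monotone T) {a : Q} (ha : T a ≤ a) (n : ℕ) :
    iterLfp T n ≤ a := by
  induction n with
  | zero => exact bot_le
  | succ n ih => exact (hT ih).trans ha

theorem isLUB_range_iterLfp_iff {q : Q} :
    IsLUB (range (iterLfp T)) q ↔ IsLUB (range fun n => T (iterLfp T n)) q := by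
  refine isLUB_congr ?_
  rw [← Nat.range_of_succ, upperBounds_union, upperBounds_singleton]
  simp [iterLfp, comp_def]

end Preorder

theorem isFixedPt_of_isLUB_range_iterLfp {Q : Type*} [PartialOrder Q] [OrderBot Q] {T : Q → Q}
    {q : Q} (hq : IsLUB (range (iterLfp T)) q)
    (hTq : IsLUB (range fun n => T (iterLfp T n)) (T q)) : IsFixedPt T q :=
  hTq.unique (isLUB_range_iterLfp_iff.mp hq)

theorem map_eq_of_isLUB_range_iterLfp {Q R : Type*} [Preorder Q] [OrderBot Q]
    [PartialOrder R] [OrderBot R] {T : Q → Q} {S : R → R} {D : Q → R} {q : Q} {r : R}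
    (hS : Monotone S) (hq : IsLUB (range (iterLfp T)) q) (hr : IsLUB (range (iterLfp S)) r)
    (hDq : IsLUB (range fun n => D (iterLfp T n)) (D q)) (hD_bot : D ⊥ = ⊥)
    (hDT : ∀ f ≤ q, D (T f) ≤ S (D f)) (hSD : S (D q) ≤ D q) : D q = r := by
  have hD_iter : ∀ n, D (iterLfp T n) ≤ iterLfp S n := by
    intro n
    induction n with
    | zero => exact hD_bot.le
    | succ n ih => exact (hDT _ (hq.1 ⟨n, rfl⟩)).trans (hS ih)
  refine le_antisymm (hDq.2 ?_) (hr.2 ?_)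
  · rintro _ ⟨n, rfl⟩
    exact (hD_iter n).trans (hr.1 ⟨n, rfl⟩)
  · rintro _ ⟨n, rfl⟩
    exact iterLfp_le_of_map_le hS hSD n

theorem D_lfp_general {P Q R : Type*} [PartialOrder P] [PartialOrder Q] [OrderBot Q]
    [PartialOrder R] [OrderBot R]
    (F : P × Q → Q) (G : P × Q × R → R) (D : Q → R)
    (hFmono : Monotone F) (hGmono : Monotone G)
    (hFcont : ∀ (x : P) (c : ℕ → Q), Monotone c → ∀ q, IsLUB (Set.range c) q →
      IsLUB (Set.range fun j => F (x, c j)) (F (x, q)))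
    (hDstrict : D ⊥ = ⊥)
    (hDcont : ∀ c : ℕ → Q, Monotone c → ∀ q, IsLUB (Set.range c) q →
      IsLUB (Set.range fun j => D (c j)) (D q))
    (hDF : ∀ x f, D (F (x, f)) = G (x, f, D f)) :
    ∀ (x : P) (q : Q) (r : R),
      IsLUB (Set.range (iterLfp fun f => F (x, f))) q →
      IsLUB (Set.range (iterLfp fun f' => G (x, q, f'))) r →
      D q = r := by
  intro x q r hq hr
  have hFx : Monotone fun f => F (x, f) := fun _ _ h => hFmono ⟨le_rfl, h⟩
  have hGx : Monotone fun f' => G (x, q, f') := fun _ _ h => hGmono ⟨le_rfl, le_rfl, h⟩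
  have hchain := iterLfp_monotone hFx
  have hfix : F (x, q) = q := isFixedPt_of_isLUB_range_iterLfp hq (hFcont x _ hchain q hq)
  refine map_eq_of_isLUB_range_iterLfp hGx hq hr (hDcont _ hchain q hq) hDstrict ?_ ?_
  · intro f hf
    rw [hDF]
    exact hGmono ⟨le_rfl, hf, le_rfl⟩
  · rw [← hDF, hfix]

/-- let `P` be a dcpo and `Q`, `R` dcppos, `F : P × Q → Q` and
`G : P × Q × R → R` continuous (monotone and preserving suprema of increasing chains),
and `D : Q → R` continuous, strict, and preserving suprema of increasing chains, with
`D (F (x, f)) = G (x, f, D f)` for all `x, f`.  Then `D` applied to the least fixed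
point `μf. F(x,f)` (the supremum of the iterates from `⊥`) is the least fixed point
`μf'. G(x, μf. F(x,f), f')`. -/
theorem D_lfp {P Q R : Type*} [PartialOrder P] [PartialOrder Q] [OrderBot Q]
    [PartialOrder R] [OrderBot R]
    (dcP : ∀ d : Set P, d.Nonempty → DirectedOn (· ≤ ·) d → ∃ a, IsLUB d a)
    (dcQ : ∀ d : Set Q, d.Nonempty → DirectedOn (· ≤ ·) d → ∃ a, IsLUB d a)
    (dcR : ∀ d : Set R, d.Nonempty → DirectedOn (· ≤ ·) d → ∃ a, IsLUB d a)
    (F : P × Q → Q) (G : P × Q × R → R) (D : Q → R)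
    (hFmono : Monotone F) (hGmono : Monotone G) (hDmono : Monotone D)
    (hFcont : ∀ (x : P) (c : ℕ → Q), Monotone c → ∀ q, IsLUB (Set.range c) q →
      IsLUB (Set.range fun j => F (x, c j)) (F (x, q)))
    (hGcont : ∀ (x : P) (q : Q) (c : ℕ → R), Monotone c → ∀ r, IsLUB (Set.range c) r →
      IsLUB (Set.range fun j => G (x, q, c j)) (G (x, q, r)))
    (hDstrict : D ⊥ = ⊥)
    (hDcont : ∀ c : ℕ → Q, Monotone c → ∀ q, IsLUB (Set.range c) q →
      IsLUB (Set.range fun j => D (c j)) (D q))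
    (hDF : ∀ x f, D (F (x, f)) = G (x, f, D f)) :
    ∀ (x : P) (q : Q) (r : R),
      IsLUB (Set.range (iterLfp fun f => F (x, f))) q →
      IsLUB (Set.range (iterLfp fun f' => G (x, q, f'))) r →
      D q = r :=
  D_lfp_general F G D hFmono hGmono hFcont hDstrict hDcont hDF
end
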